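/- Let A, B be bounded linear operators on G such that Λ^{A,B} is a self-adjoint linear relation and the pair (A,B) is normalized. Then Λ^{A,B} = {(B*u, A*u) : u ∈ G}. -/

import Mathlib

open ContinuousLinearMap

variable {G : Type*} [NormedAddCommGroup G] [InnerProductSpace ℂ G] [CompleteSpace G]

/-- The operator `M^{A,B}` on `G × G`, `(x₁,x₂) ↦ (A x₁ - B x₂, B x₁ + A x₂)`. -/
noncomputable def MAB (A B : G →L[ℂ] G) : (G × G) →L[ℂ] (G × G) :=
  ((A.comp (fst ℂ G G)) - (B.comp (snd ℂ G G))).prod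
    ((B.comp (fst ℂ G G)) + (A.comp (snd ℂ G G)))

/-- The linear relation `Λ^{A,B} = {(x₁,x₂) : A x₁ = B x₂}`. -/
def LambdaAB (A B : G →L[ℂ] G) : Submodule ℂ (G × G) where
  carrier := {p | A p.1 = B p.2}
  add_mem' := by
    intro a b ha hb
    simp only [Set.mem_setOf_eq] at *
    simp [ha, hb]
  zero_mem' := by simp
  smul_mem' := by
    intro c p hp
    simp only [Set.mem_setOf_eq] at *
    simp [hp]

/-- The adjoint of a linear relation. -/
def relAdjoint (Λ : Submodule ℂ (G × G)) : Submodule ℂ (G × G) where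
  carrier := {p | ∀ q ∈ Λ, (inner ℂ p.1 q.2 : ℂ) = inner ℂ p.2 q.1}
  add_mem' := by
    intro a b ha hb q hq
    simp [inner_add_left, ha q hq, hb q hq]
  zero_mem' := by
    intro q hq; simp
  smul_mem' := by
    intro c p hp q hq
    simp [inner_smul_left, hp q hq]

/-- A linear relation is self-adjoint if it equals its adjoint. -/
def IsSelfAdjointRel (Λ : Submodule ℂ (G × G)) : Prop := relAdjoint Λ = Λ

/-- A bounded operator is boundedly invertible if it has a bounded two-sided inverse. -/
def IsBoundedlyInvertible {E F : Type*} [NormedAddCommGroup E] [NormedSpace ℂ E]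
    [NormedAddCommGroup F] [NormedSpace ℂ F] (T : E →L[ℂ] F) : Prop :=
  ∃ T' : F →L[ℂ] E, (∀ x, T' (T x) = x) ∧ (∀ y, T (T' y) = y)

/-- The pair `(A,B)` is normalized if `A B* = B A*` and `M^{A,B}` is boundedly invertible. -/
noncomputable def IsNormalized (A B : G →L[ℂ] G) : Prop :=
  A ∘L adjoint B = B ∘L adjoint A ∧ IsBoundedlyInvertible (MAB A B)

/-! The adjoint of `M^{A,B}` on the Hilbert sum `G ⊕ G` is `M^{A*,-B*}`, which is surjective since
`M^{A,B}` has a left inverse. Writing `x ∈ Λ^{A,B}` as `M^{A*,-B*} (v, u) = (A*v + B*u, A*u - B*v)`,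
the relation `A x₁ = B x₂` and `A B* = B A*` give `(A A* + B B*) v = 0`, i.e.
`‖A* v‖² + ‖B* v‖² = 0`, so `x = (B* u, A* u)`. -/

omit [CompleteSpace G] in
theorem MAB_apply (A B : G →L[ℂ] G) (p : G × G) :
    MAB A B p = (A p.1 - B p.2, B p.1 + A p.2) :=
  rfl

omit [CompleteSpace G] in
theorem mem_LambdaAB {A B : G →L[ℂ] G} {p : G × G} : p ∈ LambdaAB A B ↔ A p.1 = B p.2 :=
  Iff.rfl

/-- `T` acting on `WithLp 2 (G × G)`, i.e. on `G × G` with the inner product of `G ⊕ G`. -/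
noncomputable def onHilbertSum (T : G × G →L[ℂ] G × G) :
    WithLp 2 (G × G) →L[ℂ] WithLp 2 (G × G) :=
  (WithLp.prodContinuousLinearEquiv 2 ℂ G G).symm.toContinuousLinearMap ∘L T ∘L
    (WithLp.prodContinuousLinearEquiv 2 ℂ G G).toContinuousLinearMap

omit [CompleteSpace G] in
theorem onHilbertSum_apply (T : G × G →L[ℂ] G × G) (p : WithLp 2 (G × G)) :
    onHilbertSum T p = WithLp.toLp 2 (T p.ofLp) :=
  rfl

theorem adjoint_onHilbertSum_MAB (A B : G →L[ℂ] G) :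
    adjoint (onHilbertSum (MAB A B)) = onHilbertSum (MAB (adjoint A) (-adjoint B)) := by
  refine Eq.symm ((eq_adjoint_iff _ _).mpr fun p q => ?_)
  simp only [onHilbertSum_apply, WithLp.prod_inner_apply, MAB_apply, neg_apply, inner_add_left,
    inner_sub_left, inner_neg_left, inner_add_right, inner_sub_right, adjoint_inner_left]
  ring

theorem surjective_MAB_adjoint_of_leftInverse {A B : G →L[ℂ] G} {M' : G × G →L[ℂ] G × G}
    (hM' : ∀ x, M' (MAB A B x) = x) : Function.Surjective (MAB (adjoint A) (-adjoint B)) := by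
  have hleft : onHilbertSum M' ∘L onHilbertSum (MAB A B) = ContinuousLinearMap.id ℂ _ := by
    ext p; simp [onHilbertSum_apply, hM']
  have hright := congrArg adjoint hleft
  rw [adjoint_comp, adjoint_id, adjoint_onHilbertSum_MAB] at hright
  intro x
  exact ⟨(adjoint (onHilbertSum M') (WithLp.toLp 2 x)).ofLp,
    congrArg WithLp.ofLp congr($hright (WithLp.toLp 2 x))⟩

theorem adjoint_apply_eq_zero_of_add_eq_zero {A B : G →L[ℂ] G} {v : G}
    (h : A (adjoint A v) + B (adjoint B v) = 0) : adjoint A v = 0 ∧ adjoint B v = 0 := by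
  have hsq : ‖adjoint A v‖ ^ 2 + ‖adjoint B v‖ ^ 2 = 0 := by
    rw [apply_norm_sq_eq_inner_adjoint_left, apply_norm_sq_eq_inner_adjoint_left, adjoint_adjoint,
      adjoint_adjoint, ← map_add, ← inner_add_left]
    simp [h]
  obtain ⟨hA, hB⟩ := (add_eq_zero_iff_of_nonneg (by positivity) (by positivity)).mp hsq
  exact ⟨by simpa using hA, by simpa using hB⟩

theorem lambdaAB_eq_range_adjoints (A B : G →L[ℂ] G)
    (hnorm : IsNormalized A B) :
    (LambdaAB A B : Set (G × G)) = Set.range (fun u : G => (adjoint B u, adjoint A u)) := by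
  obtain ⟨hAB, M', hM', -⟩ := hnorm
  have hAB' : ∀ u, A (adjoint B u) = B (adjoint A u) := fun u => congr($hAB u)
  ext x
  constructor
  · intro hx
    obtain ⟨⟨v, u⟩, rfl⟩ := surjective_MAB_adjoint_of_leftInverse hM' x
    have hv : A (adjoint A v) + B (adjoint B v) = 0 := by
      simp only [SetLike.mem_coe, mem_LambdaAB, MAB_apply, neg_apply, map_add, map_sub, map_neg,
        hAB'] at hx
      linear_combination (norm := module) hx
    obtain ⟨hAv, hBv⟩ := adjoint_apply_eq_zero_of_add_eq_zero hv
    exact ⟨u, by simp [MAB_apply, hAv, hBv]⟩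
  · rintro ⟨u, rfl⟩
    exact hAB' u
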